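/- arXiv:1810.03805 — 3 statements merged into one kernel-verified Lean document; each statement's English description precedes it below -/
import Mathlib

section
/- Let S'₁, …, S'_L ⊆ Fin p be pairwise disjoint nonempty sets, g_k : Finset (Fin p) → ℝ monotone functions depending only on coordinates in S'_k, with g_k(S'_k) ≥ τ and g_k(S'_k \ {i}) < τ for all i ∈ S'_k. Define f(S) = min_k g_k(S ∩ S'_k). Then S* = ⋃_k S'_k satisfies f(S*) ≥ τ, and for every i ∈ S*, f(S* \ {i}) < τ; i.e., the union is a minimal sufficient subset for the min-aggregated function. -/
/-- Example 3 (min/AND-gate): for `f(S) = min_k g_k(S ∩ S'_k)` with disjoint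
components, the union `S* = ⋃_k S'_k` is a sufficient subset and removing any
single element drops `f` below `τ`. -/
theorem and_gate_sis (p L : ℕ) (hL : 0 < L) (τ : ℝ)
    (S' : Fin L → Finset (Fin p)) (g : Fin L → Finset (Fin p) → ℝ)
    (hdisj : ∀ j k, j ≠ k → Disjoint (S' j) (S' k))
    (hne : ∀ k, (S' k).Nonempty)
    (hdep : ∀ k S, g k S = g k (S ∩ S' k))
    (hmono : ∀ k, ∀ A B : Finset (Fin p), A ⊆ B → B ⊆ S' k → g k A ≤ g k B)
    (hτ : ∀ k, τ ≤ g k (S' k))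
    (hmin : ∀ k, ∀ i ∈ S' k, g k ((S' k).erase i) < τ)
    (F : Finset (Fin p) → ℝ)
    (hF : ∀ S, F S = Finset.univ.inf'
      (⟨⟨0, hL⟩, Finset.mem_univ _⟩ : (Finset.univ : Finset (Fin L)).Nonempty) (fun k => g k (S ∩ S' k))) :
    τ ≤ F (Finset.univ.biUnion S') ∧
      ∀ i ∈ Finset.univ.biUnion S', F ((Finset.univ.biUnion S').erase i) < τ := by
  have hsub : ∀ k, S' k ⊆ Finset.univ.biUnion S' := fun k =>
    Finset.subset_biUnion_of_mem S' (Finset.mem_univ k)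
  constructor
  · rw [hF]
    apply Finset.le_inf'
    intro k _
    have : Finset.univ.biUnion S' ∩ S' k = S' k :=
      Finset.inter_eq_right.mpr (hsub k)
    rw [this]
    exact hτ k
  · intro i hi
    obtain ⟨j, _, hij⟩ := Finset.mem_biUnion.mp hi
    rw [hF]
    refine lt_of_le_of_lt (Finset.inf'_le _ (Finset.mem_univ j)) ?_
    have : (Finset.univ.biUnion S').erase i ∩ S' j = (S' j).erase i := by
      ext x
      simp only [Finset.mem_inter, Finset.mem_erase]
      constructor
      · rintro ⟨⟨hx, _⟩, hxj⟩; exact ⟨hx, hxj⟩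
      · rintro ⟨hx, hxj⟩; exact ⟨⟨hx, hsub j hxj⟩, hxj⟩
    rw [this]
    exact hmin j i hij
end

section
/- For a linear decision function on subsets, f(S) = ∑_{i∈S} w_i + β₀ with threshold τ > β₀, backward selection removes elements in nondecreasing order of w_i (i.e., the element removed at each step is one with minimal weight among those remaining), and hence FindSIS returns the set of indices of the ℓ largest weights for the minimal ℓ such that the sum of the ℓ largest weights plus β₀ is at least τ. -/
/-!
Removing `j` from `S` leaves `∑_S w - w j`, so maximizing `f` over one-element
removals is the same as minimizing `w j`: backward selection deletes a lightest
remaining index at each step. An index outside `T (p - ℓ)` was removed at some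
step `k < p - ℓ`, while every index of `T (p - ℓ)` was still present at that
step, so it weighs at least as much as the removed one.
-/

open Finset

theorem sum_erase_le_sum_erase_iff {α M : Type*} [DecidableEq α] [AddCommGroup M]
    [PartialOrder M] [IsOrderedAddMonoid M] {S : Finset α} {w : α → M} {i j : α}
    (hi : i ∈ S) (hj : j ∈ S) :
    ∑ x ∈ S.erase i, w x ≤ ∑ x ∈ S.erase j, w x ↔ w j ≤ w i := by
  rw [sum_erase_eq_sub hi, sum_erase_eq_sub hj, sub_le_sub_iff_left]

section ErasureChain

variable {α : Type*} [DecidableEq α] {T : ℕ → Finset α} {r : ℕ → α} {n : ℕ}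

theorem card_of_erase_chain (hmem : ∀ k < n, r k ∈ T k)
    (hTsucc : ∀ k < n, T (k + 1) = (T k).erase (r k)) {k : ℕ} (hk : k ≤ n) :
    #(T k) = #(T 0) - k := by
  induction k with
  | zero => rfl
  | succ k ih =>
    rw [hTsucc k hk, card_erase_of_mem (hmem k hk), ih (by omega)]
    omega

theorem subset_of_erase_chain (hTsucc : ∀ k < n, T (k + 1) = (T k).erase (r k))
    {a b : ℕ} (hab : a ≤ b) (hb : b ≤ n) : T b ⊆ T a := by
  induction b, hab using Nat.le_induction with
  | base => exact Subset.rfl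
  | succ b _ ih =>
    rw [hTsucc b hb]
    exact (erase_subset _ _).trans (ih (by omega))

theorem exists_eq_of_notMem_erase_chain (hTsucc : ∀ k < n, T (k + 1) = (T k).erase (r k))
    {j : α} (h0 : j ∈ T 0) {m : ℕ} (hm : m ≤ n) (hj : j ∉ T m) :
    ∃ k < m, r k = j := by
  induction m with
  | zero => exact absurd h0 hj
  | succ m ih =>
    by_cases hjm : j ∈ T m
    · refine ⟨m, m.lt_succ_self, ?_⟩
      by_contra hne
      exact hj (hTsucc m hm ▸ mem_erase.2 ⟨Ne.symm hne, hjm⟩)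
    · obtain ⟨k, hk, rfl⟩ := ih (by omega) hjm
      exact ⟨k, by omega, rfl⟩

end ErasureChain

theorem backselect_linear_general (p : ℕ) (w : Fin p → ℝ) (β₀ : ℝ)
    (f : Finset (Fin p) → ℝ) (hf : ∀ S, f S = ∑ i ∈ S, w i + β₀)
    (T : ℕ → Finset (Fin p)) (r : ℕ → Fin p)
    (hT0 : T 0 = Finset.univ)
    (hmem : ∀ k < p, r k ∈ T k)
    (hTsucc : ∀ k < p, T (k + 1) = (T k).erase (r k))
    (hargmax : ∀ k < p, ∀ j ∈ T k, f ((T k).erase j) ≤ f ((T k).erase (r k)))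
    (ℓ : ℕ) (hℓp : ℓ ≤ p) :
    (∀ k < p, ∀ j ∈ T k, w (r k) ≤ w j) ∧
    (T (p - ℓ)).card = ℓ ∧
    (∀ i ∈ T (p - ℓ), ∀ j ∉ T (p - ℓ), w j ≤ w i) := by
  have hremoved_min : ∀ k < p, ∀ j ∈ T k, w (r k) ≤ w j := by
    intro k hk j hj
    have h := hargmax k hk j hj
    rwa [hf, hf, add_le_add_iff_right, sum_erase_le_sum_erase_iff hj (hmem k hk)] at h
  refine ⟨hremoved_min, ?_, ?_⟩
  · rw [card_of_erase_chain hmem hTsucc (by omega), hT0, card_univ, Fintype.card_fin]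
    omega
  · intro i hi j hj
    obtain ⟨k, hk, rfl⟩ :=
      exists_eq_of_notMem_erase_chain hTsucc (hT0 ▸ mem_univ j) (by omega) hj
    exact hremoved_min k (by omega) i (subset_of_erase_chain hTsucc hk.le (by omega) hi)

/-- For a linear decision function `f(S) = ∑_{i∈S} wᵢ + β₀`, backward
selection removes a minimal-weight remaining element at each step, and the set
returned by FindSIS consists of the `ℓ` indices of largest weight, for the
minimal `ℓ` meeting the sufficiency threshold. -/
theorem backselect_linear (p : ℕ) (w : Fin p → ℝ) (β₀ τ : ℝ)
    (hτβ : β₀ < τ) (hsum : τ ≤ ∑ i, w i + β₀)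
    (f : Finset (Fin p) → ℝ) (hf : ∀ S, f S = ∑ i ∈ S, w i + β₀)
    (T : ℕ → Finset (Fin p)) (r : ℕ → Fin p)
    (hT0 : T 0 = Finset.univ)
    (hmem : ∀ k < p, r k ∈ T k)
    (hTsucc : ∀ k < p, T (k + 1) = (T k).erase (r k))
    (hargmax : ∀ k < p, ∀ j ∈ T k, f ((T k).erase j) ≤ f ((T k).erase (r k)))
    (ℓ : ℕ) (hℓ1 : 1 ≤ ℓ) (hℓp : ℓ ≤ p)
    (hsuff : τ ≤ f (T (p - ℓ)))
    (hminℓ : ∀ m, 1 ≤ m → m < ℓ → f (T (p - m)) < τ) :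
    (∀ k < p, ∀ j ∈ T k, w (r k) ≤ w j) ∧
    (T (p - ℓ)).card = ℓ ∧
    (∀ i ∈ T (p - ℓ), ∀ j ∉ T (p - ℓ), w j ≤ w i) :=
  backselect_linear_general p w β₀ f hf T r hT0 hmem hTsucc hargmax ℓ hℓp
end

section
/- The energy distance between two finitely supported probability distributions on ℝ² is nonnegative: for X₁ uniform on a nonempty finite set A ⊆ ℝ² and X₂ uniform on a nonempty finite set B ⊆ ℝ², D(X₁,X₂) = 2·E‖X₁ − X₂‖ − E‖X₁ − X₁'‖ − E‖X₂ − X₂'‖ ≥ 0, where X₁', X₂' are independent copies and expectations are averages over the finite supports. -/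
open MeasureTheory Real Finset
open scoped RealInnerProductSpace

/-!
On the line, `|x - y| = ∫ (𝟙[x ≤ t] - 𝟙[y ≤ t])² dt`, and for weights `w` of total mass zero
`∑ᵢ ∑ⱼ wᵢ wⱼ (fᵢ - fⱼ)² = -2 (∑ᵢ wᵢ fᵢ)² ≤ 0`; hence `∑ᵢ ∑ⱼ wᵢ wⱼ |xᵢ - xⱼ| ≤ 0`.
Crofton's formula `‖v‖ = ¼ ∫₀^{2π} |⟪v, (cos θ, sin θ)⟫| dθ` averages this over all
projections to the same inequality for `‖pᵢ - pⱼ‖` in the plane. The weights `1/|A|` on `A` and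
`-1/|B|` on `B`, placed on the disjoint union of `A` and `B`, turn that sum into minus the
energy distance.
-/

lemma sum_sum_mul_mul_sub_sq {ι R : Type*} [CommRing R] (s : Finset ι) (w g : ι → R)
    (hw : ∑ i ∈ s, w i = 0) :
    ∑ i ∈ s, ∑ j ∈ s, w i * w j * (g i - g j) ^ 2 = -2 * (∑ i ∈ s, w i * g i) ^ 2 := by
  have expand : ∀ i j, w i * w j * (g i - g j) ^ 2 =
      w j * (w i * g i ^ 2) + w i * (w j * g j ^ 2) - 2 * (w i * g i) * (w j * g j) := by
    intros; ring
  simp only [expand, sum_sub_distrib, sum_add_distrib, ← sum_mul, ← mul_sum, hw]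
  ring

lemma sq_sub_ite_le_eq_indicator (a b t : ℝ) :
    ((if a ≤ t then (1 : ℝ) else 0) - if b ≤ t then 1 else 0) ^ 2 =
      (Set.Ico (min a b) (max a b)).indicator 1 t := by
  rcases le_total a b with h | h <;> by_cases ha : a ≤ t <;> by_cases hb : b ≤ t <;>
    simp [Set.indicator_apply, h, ha, hb] <;> linarith

lemma abs_sub_eq_integral_sq_sub_ite (a b : ℝ) :
    |a - b| = ∫ t, ((if a ≤ t then (1 : ℝ) else 0) - if b ≤ t then 1 else 0) ^ 2 := by
  simp_rw [sq_sub_ite_le_eq_indicator, integral_indicator_one measurableSet_Ico]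
  simp [max_sub_min_eq_abs']

lemma integrable_sq_sub_ite (a b : ℝ) :
    Integrable fun t ↦ ((if a ≤ t then (1 : ℝ) else 0) - if b ≤ t then 1 else 0) ^ 2 := by
  simp_rw [sq_sub_ite_le_eq_indicator]
  exact (integrable_indicator_iff measurableSet_Ico).2 <|
    integrableOn_const measure_Ico_lt_top.ne (by simp)

lemma sum_sum_mul_mul_abs_sub_nonpos {ι : Type*} (s : Finset ι) (w x : ι → ℝ)
    (hw : ∑ i ∈ s, w i = 0) :
    ∑ i ∈ s, ∑ j ∈ s, w i * w j * |x i - x j| ≤ 0 := by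
  set step : ι → ℝ → ℝ := fun i t ↦ if x i ≤ t then 1 else 0
  have hint : ∀ i j, Integrable fun t ↦ w i * w j * (step i t - step j t) ^ 2 :=
    fun i j ↦ (integrable_sq_sub_ite _ _).const_mul _
  calc ∑ i ∈ s, ∑ j ∈ s, w i * w j * |x i - x j|
      = ∫ t, ∑ i ∈ s, ∑ j ∈ s, w i * w j * (step i t - step j t) ^ 2 := by
        rw [integral_finsetSum _ fun i _ ↦ integrable_finsetSum _ fun j _ ↦ hint i j]
        simp_rw [integral_finsetSum _ fun j _ ↦ hint _ j, integral_const_mul,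
          abs_sub_eq_integral_sq_sub_ite]
        rfl
    _ = ∫ t, -2 * (∑ i ∈ s, w i * step i t) ^ 2 := by
        simp_rw [sum_sum_mul_mul_sub_sq s w _ hw]
    _ ≤ 0 := integral_nonpos fun t ↦ by
        simpa using sq_nonneg (∑ i ∈ s, w i * step i t)

lemma integral_abs_cos_sub (φ : ℝ) : ∫ θ in 0..2 * π, |cos (θ - φ)| = 4 := by
  have hper : Function.Periodic (fun θ ↦ |cos θ|) π := fun θ ↦ by simp [cos_add_pi]
  have hint : ∀ a b, IntervalIntegrable (fun θ ↦ |cos θ|) volume a b :=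
    fun a b ↦ continuous_cos.abs.intervalIntegrable a b
  have hcos : ∫ θ in -(π / 2)..π / 2, |cos θ| = 2 := by
    rw [intervalIntegral.integral_congr fun θ hθ ↦ abs_of_nonneg (cos_nonneg_of_mem_Icc ?_)]
    · norm_num
    · rwa [Set.uIcc_of_le (by linarith [pi_pos])] at hθ
  calc ∫ θ in 0..2 * π, |cos (θ - φ)|
      = ∫ θ in -φ..-φ + (2 : ℤ) • π, |cos θ| := by
        rw [intervalIntegral.integral_comp_sub_right (fun θ ↦ |cos θ|)]; congr 1 <;> simp; ring
    _ = 2 * ∫ θ in -(π / 2)..-(π / 2) + π, |cos θ| := by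
        rw [hper.intervalIntegral_add_zsmul_eq 2 _ hint, hper.intervalIntegral_add_eq _ (-(π / 2))]
        ring
    _ = 4 := by rw [show -(π / 2) + π = π / 2 by ring, hcos]; norm_num

lemma integral_abs_mul_cos_add_mul_sin (a b : ℝ) :
    ∫ θ in 0..2 * π, |a * cos θ + b * sin θ| = 4 * √(a ^ 2 + b ^ 2) := by
  set z : ℂ := ⟨a, b⟩
  have hz : ‖z‖ = √(a ^ 2 + b ^ 2) := by
    rw [Complex.norm_def, Complex.normSq_mk]; ring_nf
  have hrot : ∀ θ, a * cos θ + b * sin θ = ‖z‖ * cos (θ - z.arg) := fun θ ↦ by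
    rw [cos_sub]
    linear_combination (-cos θ) * Complex.norm_mul_cos_arg z - sin θ * Complex.norm_mul_sin_arg z
  simp_rw [hrot, abs_mul, abs_norm, intervalIntegral.integral_const_mul, integral_abs_cos_sub, hz]
  ring

lemma norm_eq_integral_abs_inner (v : EuclideanSpace ℝ (Fin 2)) :
    ‖v‖ = (1 / 4) * ∫ θ in 0..2 * π, |⟪v, !₂[cos θ, sin θ]⟫| := by
  have hinner : ∀ θ, ⟪v, !₂[cos θ, sin θ]⟫ = v 0 * cos θ + v 1 * sin θ := fun θ ↦ by
    simp [PiLp.inner_apply, Fin.sum_univ_two, mul_comm]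
  simp_rw [hinner, integral_abs_mul_cos_add_mul_sin, EuclideanSpace.norm_eq, Fin.sum_univ_two,
    Real.norm_eq_abs, sq_abs]
  ring

lemma sum_sum_mul_mul_norm_sub_nonpos {ι : Type*} (s : Finset ι) (w : ι → ℝ)
    (p : ι → EuclideanSpace ℝ (Fin 2)) (hw : ∑ i ∈ s, w i = 0) :
    ∑ i ∈ s, ∑ j ∈ s, w i * w j * ‖p i - p j‖ ≤ 0 := by
  set proj : ι → ℝ → ℝ := fun i θ ↦ ⟪p i, !₂[cos θ, sin θ]⟫
  have hcont : ∀ i j, Continuous fun θ ↦ w i * w j * |proj i θ - proj j θ| :=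
    fun i j ↦ by fun_prop
  calc ∑ i ∈ s, ∑ j ∈ s, w i * w j * ‖p i - p j‖
      = 1 / 4 * ∫ θ in 0..2 * π, ∑ i ∈ s, ∑ j ∈ s, w i * w j * |proj i θ - proj j θ| := by
        rw [intervalIntegral.integral_finsetSum fun i _ ↦
          (continuous_finsetSum _ fun j _ ↦ hcont i j).intervalIntegrable _ _, mul_sum]
        refine sum_congr rfl fun i _ ↦ ?_
        rw [intervalIntegral.integral_finsetSum fun j _ ↦ (hcont i j).intervalIntegrable _ _,
          mul_sum]
        refine sum_congr rfl fun j _ ↦ ?_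
        simp_rw [intervalIntegral.integral_const_mul, norm_eq_integral_abs_inner (p i - p j),
          inner_sub_left]
        ring
    _ ≤ 0 := by
        refine mul_nonpos_of_nonneg_of_nonpos (by norm_num) ?_
        rw [intervalIntegral.integral_of_le (by positivity)]
        exact integral_nonpos fun θ ↦ sum_sum_mul_mul_abs_sub_nonpos s w (proj · θ) hw

/-- Nonnegativity of the energy distance between two uniform distributions on
nonempty finite subsets of the Euclidean plane. -/
theorem energy_distance_nonneg (A B : Finset (EuclideanSpace ℝ (Fin 2)))
    (hA : A.Nonempty) (hB : B.Nonempty) :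
    0 ≤ 2 * ((1 / ((A.card : ℝ) * (B.card : ℝ))) *
        ∑ a ∈ A, ∑ b ∈ B, ‖a - b‖)
      - (1 / ((A.card : ℝ) ^ 2)) * ∑ a ∈ A, ∑ a' ∈ A, ‖a - a'‖
      - (1 / ((B.card : ℝ) ^ 2)) * ∑ b ∈ B, ∑ b' ∈ B, ‖b - b'‖ := by
  simp only [one_div, mul_inv, ← inv_pow]
  set α : ℝ := (#A : ℝ)⁻¹
  set β : ℝ := (#B : ℝ)⁻¹
  have hα : #A * α = 1 := mul_inv_cancel₀ (by simpa using hA.card_pos.ne')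
  have hβ : #B * β = 1 := mul_inv_cancel₀ (by simpa using hB.card_pos.ne')
  have hw : ∑ i ∈ A.disjSum B, Sum.elim (fun _ ↦ α) (fun _ ↦ -β) i = 0 := by
    simp [sum_disjSum, hα, hβ]
  have key := sum_sum_mul_mul_norm_sub_nonpos _ _ (Sum.elim id id) hw
  simp only [sum_disjSum, Sum.elim_inl, Sum.elim_inr, id, ← mul_sum, sum_add_distrib] at key
  have hsymm : ∑ b ∈ B, ∑ a ∈ A, ‖b - a‖ = ∑ a ∈ A, ∑ b ∈ B, ‖a - b‖ := by
    rw [sum_comm]; simp only [norm_sub_rev]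
  rw [hsymm] at key
  linarith
end
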